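/- arXiv:2511.12654 — 2 statements merged into one kernel-verified Lean document; each statement's English description precedes it below -/
import Mathlib

section
/- Let 0 < δ < 1 and 0 < R. There exists κ with 0 < κ < 1 such that for all integers n and N with 1 ≤ n < N R² (1−δ), one has Q(n, N R²)/Q(n+1, N R²) ≤ κ, where Q(m,z) = e^{-z} ∑_{k=0}^{m-1} z^k/k!. -/
/-- `Q(m,z) = e^{-z} ∑_{k=0}^{m-1} z^k/k!`. -/
noncomputable def Qfun (m : ℕ) (z : ℝ) : ℝ :=
  Real.exp (-z) * ∑ k ∈ Finset.range m, z ^ k / (Nat.factorial k)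

/-! With `t_n = z^n/n!` one has `t_{n+1} = t_n · z/(n+1)`, so `t_n ≤ c t_{n+1}` whenever
`n + 1 ≤ c z`. Adding this (times `e^{-z}`) to `Q(n) ≤ c Q(n+1)` gives `Q(n+1) ≤ c Q(n+2)`, so by
induction `Q(n) ≤ c Q(n+1)` for all `n ≤ c z`; `κ = c = 1 - δ` works. -/

lemma pow_div_factorial_le_mul_pow_succ_div_factorial_succ {c z : ℝ} {n : ℕ} (hc : 0 ≤ c)
    (h : (n : ℝ) + 1 ≤ c * z) :
    z ^ n / n.factorial ≤ c * (z ^ (n + 1) / (n + 1).factorial) := by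
  have hn : (0 : ℝ) < n + 1 := by positivity
  have hz : 0 < z := pos_of_mul_pos_right (hn.trans_le h) hc
  have hsucc : c * (z ^ (n + 1) / (n + 1).factorial) = z ^ n / n.factorial * (c * z / (n + 1)) := by
    rw [Nat.factorial_succ, Nat.cast_mul, pow_succ]; push_cast; field_simp
  rw [hsucc]
  exact le_mul_of_one_le_right (by positivity) ((one_le_div hn).2 h)

lemma Qfun_succ (n : ℕ) (z : ℝ) :
    Qfun (n + 1) z = Qfun n z + Real.exp (-z) * (z ^ n / n.factorial) := by
  rw [Qfun, Qfun, Finset.sum_range_succ, mul_add]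

lemma Qfun_succ_pos (n : ℕ) {z : ℝ} (hz : 0 ≤ z) : 0 < Qfun (n + 1) z := by
  have hsum : (1 : ℝ) ≤ ∑ k ∈ Finset.range (n + 1), z ^ k / k.factorial := by
    rw [Finset.sum_range_succ']
    simpa using Finset.sum_nonneg fun k _ => by positivity
  exact mul_pos (Real.exp_pos _) (one_pos.trans_le hsum)

lemma Qfun_le_mul_Qfun_succ {c z : ℝ} (hc : 0 ≤ c) :
    ∀ {n : ℕ}, (n : ℝ) ≤ c * z → Qfun n z ≤ c * Qfun (n + 1) z
  | 0, _ => by simpa [Qfun] using mul_nonneg hc (Real.exp_pos (-z)).le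
  | n + 1, h => by
    push_cast at h
    have ih := Qfun_le_mul_Qfun_succ hc (n := n) (by linarith)
    have hterm := mul_le_mul_of_nonneg_left
      (pow_div_factorial_le_mul_pow_succ_div_factorial_succ hc h) (Real.exp_pos (-z)).le
    rw [Qfun_succ (n + 1)]
    rw [Qfun_succ n] at ih ⊢
    linarith

theorem stmt_6_general (δ R : ℝ) (hδ : 0 < δ) (hδ1 : δ < 1) :
    ∃ κ : ℝ, 0 < κ ∧ κ < 1 ∧
      ∀ n N : ℕ, 1 ≤ n → (n : ℝ) < N * R ^ 2 * (1 - δ) →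
        Qfun n (N * R ^ 2) / Qfun (n + 1) (N * R ^ 2) ≤ κ := by
  refine ⟨1 - δ, by linarith, by linarith, fun n N _ hlt => ?_⟩
  have hc : 0 < 1 - δ := by linarith
  have hz : 0 < (N * R ^ 2 : ℝ) := pos_of_mul_pos_left ((Nat.cast_nonneg n).trans_lt hlt) hc.le
  rw [div_le_iff₀ (Qfun_succ_pos n hz.le)]
  exact Qfun_le_mul_Qfun_succ hc.le (by linarith)

theorem stmt_6 (δ R : ℝ) (hδ : 0 < δ) (hδ1 : δ < 1) (hR : 0 < R) :
    ∃ κ : ℝ, 0 < κ ∧ κ < 1 ∧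
      ∀ n N : ℕ, 1 ≤ n → (n : ℝ) < N * R ^ 2 * (1 - δ) →
        Qfun n (N * R ^ 2) / Qfun (n + 1) (N * R ^ 2) ≤ κ :=
  stmt_6_general δ R hδ hδ1
end

section
/- The kernel K(z,w) = (1 − (z + w̄ + 1) e^{−z−w̄}) / (π (z + w̄)²) on the right half-plane {Re z > 0} admits the integral representation K(z,w) = (1/π) ∫_0^1 s e^{−s(z+w̄)} ds, and consequently for every continuous compactly supported g on the right half-plane, ∬ K(z,w) g(z) conj(g(w)) dA(z) dA(w) ≥ 0 (K is positive semi-definite). -/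
/-!
For `Re z, Re w > 0` the kernel is a superposition of rank-one kernels,
`K(z,w) = π⁻¹ ∫₀¹ φₛ(z) conj φₛ(w) ds` with `φₛ(z) = √s e^{-sz}`. Since `g` is supported in the
right half-plane, `|φₛ| ≤ 1` on its support, so Fubini applies and the quadratic form equals
`π⁻¹ ∫₀¹ |∫ φₛ g dA|² ds ≥ 0`.
-/

open Complex MeasureTheory
open scoped ComplexConjugate

/-- The limiting hard-wall kernel
`K(z,w) = (1 - (z + w̄ + 1) e^{-z-w̄}) / (π (z + w̄)²)`. -/
noncomputable def hardWallKernel (z w : ℂ) : ℂ :=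
  (1 - (z + (starRingEnd ℂ) w + 1) * Complex.exp (-(z + (starRingEnd ℂ) w))) /
    (↑Real.pi * (z + (starRingEnd ℂ) w) ^ 2)

section GramKernel

variable {S X : Type*} [MeasurableSpace S] [MeasurableSpace X] {ν : Measure S} {μ : Measure X}
  {ψ : S → X → ℂ} {h : X → ℝ}

theorem integrable_prod_mul_of_norm_le [IsFiniteMeasure ν] {c : S → ℂ} {B : ℝ}
    (hψ : Measurable (Function.uncurry ψ)) (hh : Integrable h μ)
    (hψh : ∀ᵐ s ∂ν, ∀ x, ‖ψ s x‖ ≤ h x) (hc : Measurable c) (hcB : ∀ᵐ s ∂ν, ‖c s‖ ≤ B) :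
    Integrable (fun p : X × S => ψ p.2 p.1 * c p.2) (μ.prod ν) := by
  refine Integrable.mono' (hh.mul_prod (integrable_const B)) ?_ ?_
  · exact ((hψ.comp measurable_swap).mul (hc.comp measurable_snd)).aestronglyMeasurable
  · filter_upwards [Measure.quasiMeasurePreserving_snd.ae (hψh.and hcB)] with p ⟨hψp, hcp⟩
    rw [norm_mul]
    exact mul_le_mul (hψp p.1) hcp (norm_nonneg _) ((norm_nonneg _).trans (hψp p.1))

variable [IsFiniteMeasure ν] [SFinite μ]

theorem integral_integral_mul_conj_eq (hψ : Measurable (Function.uncurry ψ))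
    (hh : Integrable h μ) (hψh : ∀ᵐ s ∂ν, ∀ x, ‖ψ s x‖ ≤ h x) (x : X) :
    ∫ y, ∫ s, ψ s x * conj (ψ s y) ∂ν ∂μ = ∫ s, ψ s x * conj (∫ y, ψ s y ∂μ) ∂ν := by
  have hconj : Measurable (Function.uncurry fun s y => conj (ψ s y)) :=
    Complex.continuous_conj.measurable.comp hψ
  have hint := integrable_prod_mul_of_norm_le hconj hh (by simpa using hψh)
    (hψ.comp (measurable_id.prodMk measurable_const)) (hψh.mono fun s hs => hs x)
  rw [integral_integral_swap (hint.congr (ae_of_all _ fun p => mul_comm _ _))]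
  simp_rw [integral_const_mul, integral_conj]

theorem integral_integral_integral_mul_conj_eq (hψ : Measurable (Function.uncurry ψ))
    (hh : Integrable h μ) (hψh : ∀ᵐ s ∂ν, ∀ x, ‖ψ s x‖ ≤ h x) :
    ∫ x, ∫ y, ∫ s, ψ s x * conj (ψ s y) ∂ν ∂μ ∂μ =
      ((∫ s, ‖∫ x, ψ s x ∂μ‖ ^ 2 ∂ν : ℝ) : ℂ) := by
  have hF : Measurable fun s => ∫ x, ψ s x ∂μ :=
    hψ.stronglyMeasurable.integral_prod_right.measurable
  have hFB : ∀ᵐ s ∂ν, ‖conj (∫ x, ψ s x ∂μ)‖ ≤ ∫ x, h x ∂μ := by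
    filter_upwards [hψh] with s hs
    rw [RCLike.norm_conj]
    exact norm_integral_le_of_norm_le hh (ae_of_all _ hs)
  have hint := integrable_prod_mul_of_norm_le hψ hh hψh
    (Complex.continuous_conj.measurable.comp hF) hFB
  simp_rw [integral_integral_mul_conj_eq hψ hh hψh]
  rw [integral_integral_swap hint]
  simp_rw [integral_mul_const, Complex.mul_conj', ← ofReal_pow]
  exact integral_ofReal

end GramKernel

theorem integral_mul_exp_neg_mul {a : ℂ} (ha : a ≠ 0) :
    ∫ s in (0:ℝ)..1, (s : ℂ) * exp (-(s : ℂ) * a) = (1 - (a + 1) * exp (-a)) / a ^ 2 := by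
  have hderiv (u : ℂ) : HasDerivAt (fun u => (u * a + 1) * exp (-u * a) / -a ^ 2)
      (u * exp (-u * a)) u := by
    have hexp : HasDerivAt (fun u => exp (-u * a)) (exp (-u * a) * (-1 * a)) u :=
      ((hasDerivAt_neg u).mul_const a).cexp
    refine ((((hasDerivAt_id' u).mul_const a).add_const 1).mul hexp |>.div_const (-a ^ 2)
      |>.congr_deriv ?_)
    field_simp
    ring
  have hcont : Continuous fun s : ℝ => (s : ℂ) * exp (-(s : ℂ) * a) := by fun_prop
  rw [intervalIntegral.integral_eq_sub_of_hasDerivAt (fun s _ => (hderiv s).comp_ofReal)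
    (hcont.intervalIntegrable _ _)]
  field_simp
  simp only [ofReal_one, ofReal_zero, one_mul, mul_zero, neg_zero, exp_zero]
  ring

theorem hardWallKernel_eq_integral {z w : ℂ} (hz : 0 < z.re) (hw : 0 < w.re) :
    hardWallKernel z w =
      1 / (Real.pi : ℂ) * ∫ s in (0:ℝ)..1, (s : ℂ) * exp (-(s : ℂ) * (z + conj w)) := by
  have hzw : z + conj w ≠ 0 := ne_of_apply_ne re (by rw [add_re, conj_re, zero_re]; linarith)
  rw [integral_mul_exp_neg_mul hzw, hardWallKernel]
  field_simp

noncomputable def hardWallFeature (s : ℝ) (z : ℂ) : ℂ :=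
  (Real.sqrt s : ℂ) * exp (-(s : ℂ) * z)

theorem norm_hardWallFeature_le_one {s : ℝ} (hs : s ∈ Set.Icc (0:ℝ) 1) {z : ℂ}
    (hz : 0 ≤ z.re) :
    ‖hardWallFeature s z‖ ≤ 1 := by
  rw [hardWallFeature, norm_mul, norm_exp, norm_real, Real.norm_of_nonneg (Real.sqrt_nonneg s)]
  refine mul_le_one₀ (Real.sqrt_le_one.mpr hs.2) (Real.exp_pos _).le (Real.exp_le_one_iff.mpr ?_)
  simpa using mul_nonneg hs.1 hz

theorem hardWallFeature_mul_conj {s : ℝ} (hs : 0 ≤ s) (z w : ℂ) :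
    hardWallFeature s z * conj (hardWallFeature s w) = s * exp (-(s : ℂ) * (z + conj w)) := by
  have hsqrt : (Real.sqrt s : ℂ) * Real.sqrt s = s := by
    rw [← ofReal_mul, Real.mul_self_sqrt hs]
  rw [hardWallFeature, hardWallFeature, map_mul, conj_ofReal, ← exp_conj, map_mul,
    map_neg, conj_ofReal, mul_add, exp_add]
  linear_combination (exp (-(s : ℂ) * z) * exp (-(s : ℂ) * conj w)) * hsqrt

theorem hardWallKernel_eq_setIntegral_feature {z w : ℂ} (hz : 0 < z.re) (hw : 0 < w.re) :
    hardWallKernel z w = 1 / (Real.pi : ℂ) *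
      ∫ s in Set.Ioc (0:ℝ) 1, hardWallFeature s z * conj (hardWallFeature s w) := by
  rw [hardWallKernel_eq_integral hz hw, intervalIntegral.integral_of_le zero_le_one]
  congr 1
  exact setIntegral_congr_fun measurableSet_Ioc fun s hs =>
    (hardWallFeature_mul_conj hs.1.le z w).symm

theorem hardWallKernel_mul_eq_setIntegral {g : ℂ → ℂ} (hg : Function.support g ⊆ {z | 0 < z.re})
    (z w : ℂ) :
    hardWallKernel z w * g z * conj (g w) = 1 / (Real.pi : ℂ) *
      ∫ s in Set.Ioc (0:ℝ) 1, hardWallFeature s z * g z * conj (hardWallFeature s w * g w) := by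
  by_cases hgz : g z = 0
  · simp [hgz]
  by_cases hgw : g w = 0
  · simp [hgw]
  rw [hardWallKernel_eq_setIntegral_feature (hg hgz) (hg hgw), mul_assoc, mul_assoc,
    ← integral_mul_const]
  congr 1
  refine integral_congr_ae (ae_of_all _ fun s => ?_)
  simp only [map_mul]
  ring

theorem stmt_10 :
    (∀ z w : ℂ, 0 < z.re → 0 < w.re →
      hardWallKernel z w =
        (1 / (Real.pi : ℂ)) *
          ∫ s in (0:ℝ)..1, (s : ℂ) * Complex.exp (-(s : ℂ) * (z + (starRingEnd ℂ) w))) ∧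
    ∀ g : ℂ → ℂ, Continuous g → HasCompactSupport g →
      (Function.support g ⊆ {z : ℂ | 0 < z.re}) →
      (∫ z : ℂ, ∫ w : ℂ, hardWallKernel z w * g z * (starRingEnd ℂ) (g w)).im = 0 ∧
      0 ≤ (∫ z : ℂ, ∫ w : ℂ, hardWallKernel z w * g z * (starRingEnd ℂ) (g w)).re := by
  refine ⟨fun z w hz hw => hardWallKernel_eq_integral hz hw, fun g hg hgc hsupp => ?_⟩
  have hψ : Measurable (Function.uncurry fun s z => hardWallFeature s z * g z) := by
    unfold hardWallFeature
    exact Continuous.measurable (by fun_prop)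
  have hbound : ∀ᵐ s ∂(volume.restrict (Set.Ioc (0:ℝ) 1)), ∀ z,
      ‖hardWallFeature s z * g z‖ ≤ ‖g z‖ := by
    refine ae_restrict_of_forall_mem measurableSet_Ioc fun s hs z => ?_
    by_cases hgz : g z = 0
    · simp [hgz]
    rw [norm_mul]
    exact mul_le_of_le_one_left (norm_nonneg _)
      (norm_hardWallFeature_le_one (Set.Ioc_subset_Icc_self hs) (hsupp hgz).le)
  have hquad : ∫ z, ∫ w, hardWallKernel z w * g z * conj (g w) =
      ((1 / Real.pi * ∫ s in Set.Ioc (0:ℝ) 1, ‖∫ z, hardWallFeature s z * g z‖ ^ 2 : ℝ) : ℂ) := by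
    have hgi : Integrable (fun z => ‖g z‖) := (hg.integrable_of_hasCompactSupport hgc).norm
    simp_rw [hardWallKernel_mul_eq_setIntegral hsupp, integral_const_mul,
      integral_integral_integral_mul_conj_eq hψ hgi hbound]
    push_cast
    rfl
  rw [hquad, ofReal_im, ofReal_re]
  exact ⟨rfl, by positivity⟩
end
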